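/- arXiv:1503.03810 — 5 statements merged into one kernel-verified Lean document; each statement's English description precedes it below -/
import Mathlib

section
/- Suppose g : ℕ → ℝ is a nondecreasing function satisfying g(n^j) ≤ j·g(n) for all j, n ∈ ℕ. Then the limit lim_{n→∞} g(n)/ln n exists and equals inf_{n ≥ 2} g(n)/ln n. -/
/-! For `b ≥ 2` and `b ^ k ≤ N < b ^ (k + 1)`, monotonicity and submultiplicativity give
`g N ≤ (k + 1) g b` while `log N ≥ k log b`, so `g N / log N ≤ (1 + 1/k) · g b / log b`.
As `N → ∞` also `k → ∞`, so the upper limit is at most every `g b / log b`, i.e. at most the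
infimum, which is trivially a lower bound for every term. -/

open Filter Topology

theorem Nat.tendsto_log_atTop {b : ℕ} (hb : 1 < b) : Tendsto (Nat.log b) atTop atTop :=
  tendsto_atTop_atTop.2 fun k =>
    ⟨b ^ k, fun _ hN => Nat.le_log_of_pow_le hb hN⟩

section Submultiplicative

variable {g : ℕ → ℝ} (hmono : MonotoneOn g (Set.Ici 1))
  (hsub : ∀ j n : ℕ, 1 ≤ j → 1 ≤ n → g (n ^ j) ≤ j * g n)
include hmono hsub

theorem nonneg_of_pow_le_mul {n : ℕ} (hn : 1 ≤ n) : 0 ≤ g n := by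
  have hsq : g (n ^ 2) ≤ 2 * g n := by simpa using hsub 2 n one_le_two hn
  linarith [hmono hn (Nat.one_le_pow 2 n hn) (Nat.le_self_pow two_ne_zero n)]

theorem div_log_le_of_one_le_log {b N : ℕ} (hb : 2 ≤ b)
    (hk : 1 ≤ Nat.log b N) :
    g N / Real.log N ≤ (1 + (Nat.log b N : ℝ)⁻¹) * (g b / Real.log b) := by
  set k := Nat.log b N
  have hN : N ≠ 0 := by rintro rfl; simp [k] at hk
  have hgb : 0 ≤ g b := nonneg_of_pow_le_mul hmono hsub (by omega)
  have hlogb : 0 < Real.log b := Real.log_pos (by exact_mod_cast hb)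
  have hkpos : (0 : ℝ) < k := by exact_mod_cast hk
  have hgN : g N ≤ (k + 1) * g b := by
    have hlt : N < b ^ (k + 1) := Nat.lt_pow_succ_log_self hb N
    calc g N ≤ g (b ^ (k + 1)) := hmono (by simp; omega) (by simp; omega) hlt.le
      _ ≤ (k + 1) * g b := by exact_mod_cast hsub (k + 1) b (by omega) (by omega)
  have hlogN : k * Real.log b ≤ Real.log N := by
    rw [← Real.log_pow]
    exact Real.log_le_log (by positivity) (by exact_mod_cast Nat.pow_log_le_self b hN)
  calc g N / Real.log N ≤ (k + 1) * g b / (k * Real.log b) :=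
        div_le_div₀ (by positivity) hgN (by positivity) hlogN
    _ = (1 + (k : ℝ)⁻¹) * (g b / Real.log b) := by field_simp

end Submultiplicative

theorem tendsto_div_log_of_submultiplicative (g : ℕ → ℝ)
    (hmono : ∀ m n : ℕ, 1 ≤ m → m ≤ n → g m ≤ g n)
    (hsub : ∀ j n : ℕ, 1 ≤ j → 1 ≤ n → g (n ^ j) ≤ j * g n) :
    Filter.Tendsto (fun n : ℕ => g n / Real.log n) Filter.atTop
      (nhds (⨅ n : {m : ℕ // 2 ≤ m}, g n / Real.log n)) := by
  have hmono' : MonotoneOn g (Set.Ici 1) := fun m hm n _ hmn => hmono m n hm hmn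
  have hbdd : BddBelow (Set.range fun n : {m : ℕ // 2 ≤ m} => g n / Real.log n) := by
    refine ⟨0, ?_⟩
    rintro _ ⟨⟨n, hn⟩, rfl⟩
    exact div_nonneg (nonneg_of_pow_le_mul hmono' hsub (one_le_two.trans hn))
      (Real.log_natCast_nonneg n)
  refine tendsto_order.2 ⟨fun a ha => ?_, fun a ha => ?_⟩
  · filter_upwards [eventually_ge_atTop 2] with N hN
    exact ha.trans_le (ciInf_le hbdd ⟨N, hN⟩)
  · obtain ⟨⟨b, hb⟩, hba⟩ := exists_lt_of_ciInf_lt ha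
    have hlog := Nat.tendsto_log_atTop (b := b) hb
    have hlim : Tendsto (fun N => (1 + (Nat.log b N : ℝ)⁻¹) * (g b / Real.log b)) atTop
        (𝓝 (g b / Real.log b)) := by
      simpa using ((tendsto_inv_atTop_zero.comp
        (tendsto_natCast_atTop_atTop.comp hlog)).const_add 1).mul_const (g b / Real.log b)
    filter_upwards [hlim.eventually (gt_mem_nhds hba), hlog.eventually_ge_atTop 1] with N hN hk
    exact (div_log_le_of_one_le_log hmono' hsub hb hk).trans_lt hN
end

section
/- For any set A ⊆ ℕ of positive integers, the limit lim_{n→∞} sup_{k ≥ 1} (1/ln n) · Σ_{x ∈ A ∩ [k, nk]} 1/x exists and equals inf_{n ≥ 2} sup_{k ≥ 1} (1/ln n) · Σ_{x ∈ A ∩ [k, nk]} 1/x. -/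
/-!
Write `F(n) = sup_k Σ_{x ∈ A ∩ [k, nk]} 1/x`, so that `lBDseq A n = F(n) / ln n`. The function
`F` is monotone and satisfies `F(mn) ≤ F(m) + F(n)`, since a window `[k, mnk]` is covered by
`[k, mk]` and `[mk, n·mk]`. As in Fekete's lemma this gives `F(n) ≤ (j + 1) F(m)` whenever
`n ≤ m^(j+1)`, and taking `j = ⌊log_m n⌋` yields `F(n) / ln n ≤ (1 + 1/j) F(m) / ln m`; so the
sequence eventually lies below any value above its infimum over `n ≥ 2`.
-/

open Filter

/-- The quantity `sup_{k ≥ 1} (1/ln n) · Σ_{x ∈ A ∩ [k, nk]} 1/x`. -/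
noncomputable def lBDseq (A : Set ℕ) (n : ℕ) : ℝ :=
  ⨆ k : {k : ℕ // 1 ≤ k},
    (1 / Real.log n) * ∑ x ∈ Finset.Icc (k : ℕ) (n * k), Set.indicator A (fun x => 1 / (x : ℝ)) x

/-- The upper Banach logarithmic density, `ℓBD(A) = lim_{n→∞} lBDseq A n`.
Since the limit always exists, it coincides with the `limsup`, which we use as definition. -/
noncomputable def lBD (A : Set ℕ) : ℝ :=
  Filter.limsup (lBDseq A) Filter.atTop

open Topology

section MultiplicativeFekete

variable {f : ℕ → ℝ}

theorem apply_pow_succ_le (hmul : ∀ m n, 1 ≤ m → f (m * n) ≤ f m + f n) {m : ℕ} (hm : 1 ≤ m)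
    (t : ℕ) : f (m ^ (t + 1)) ≤ (t + 1) * f m := by
  induction t with
  | zero => simp
  | succ t ih =>
    calc f (m ^ (t + 1 + 1)) = f (m ^ (t + 1) * m) := by rw [pow_succ]
      _ ≤ f (m ^ (t + 1)) + f m := hmul _ _ (Nat.one_le_pow _ _ hm)
      _ ≤ (t + 1) * f m + f m := by gcongr
      _ = ((t + 1 : ℕ) + 1) * f m := by push_cast; ring

theorem apply_nonneg_of_mul_le (hf : Monotone f) (hmul : ∀ m n, 1 ≤ m → f (m * n) ≤ f m + f n)
    {n : ℕ} (hn : 1 ≤ n) : 0 ≤ f n := by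
  have h1 : f 1 ≤ f 1 + f 1 := hmul 1 1 le_rfl
  linarith [hf hn]

theorem div_log_le_one_add_inv_natLog_mul (hf : Monotone f)
    (hmul : ∀ m n, 1 ≤ m → f (m * n) ≤ f m + f n) {m n : ℕ} (hm : 2 ≤ m) (hn : m ≤ n) :
    f n / Real.log n ≤ (1 + (Nat.log m n : ℝ)⁻¹) * (f m / Real.log m) := by
  set j := Nat.log m n
  have hj : 0 < j := Nat.log_pos hm hn
  have hfm : 0 ≤ f m := apply_nonneg_of_mul_le hf hmul (by omega)
  have hlogm : 0 < Real.log m := Real.log_pos (by exact_mod_cast hm)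
  have hfn : f n ≤ (j + 1) * f m :=
    (hf (Nat.lt_pow_succ_log_self (by omega) n).le).trans (apply_pow_succ_le hmul (by omega) j)
  have hlogn : j * Real.log m ≤ Real.log n := by
    rw [← Real.log_pow, ← Nat.cast_pow]
    exact Real.log_le_log (by positivity) (by exact_mod_cast Nat.pow_log_le_self m (by omega))
  calc f n / Real.log n ≤ (j + 1) * f m / (j * Real.log m) := by
        gcongr
    _ = (1 + (j : ℝ)⁻¹) * (f m / Real.log m) := by field_simp

theorem tendsto_div_log_iInf (hf : Monotone f) (hmul : ∀ m n, 1 ≤ m → f (m * n) ≤ f m + f n) :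
    Tendsto (fun n => f n / Real.log n) atTop
      (𝓝 (⨅ n : {m : ℕ // 2 ≤ m}, f n / Real.log n)) := by
  set L := ⨅ n : {m : ℕ // 2 ≤ m}, f n / Real.log n
  have hL : ∀ n, 2 ≤ n → L ≤ f n / Real.log n := by
    refine fun n hn => ciInf_le ⟨0, ?_⟩ (⟨n, hn⟩ : {m : ℕ // 2 ≤ m})
    rintro _ ⟨⟨k, hk⟩, rfl⟩
    exact div_nonneg (apply_nonneg_of_mul_le hf hmul (one_le_two.trans hk))
      (Real.log_natCast_nonneg k)
  refine tendsto_order.2 ⟨fun a ha => eventually_atTop.2 ⟨2, fun n hn => ha.trans_le (hL n hn)⟩,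
    fun b hb => ?_⟩
  obtain ⟨⟨m, hm⟩, hmb⟩ := exists_lt_of_ciInf_lt hb
  have hlog : Tendsto (Nat.log m) atTop atTop :=
    tendsto_atTop_atTop.2 fun J => ⟨m ^ J, fun n hn => Nat.le_log_of_pow_le (by omega) hn⟩
  have hbound : Tendsto (fun n => (1 + (Nat.log m n : ℝ)⁻¹) * (f m / Real.log m)) atTop
      (𝓝 (f m / Real.log m)) := by
    simpa using ((tendsto_inv_atTop_zero.comp (tendsto_natCast_atTop_atTop.comp hlog)).const_add
      1).mul_const (f m / Real.log m)
  filter_upwards [hbound.eventually (gt_mem_nhds hmb), eventually_ge_atTop m] with n hlt hn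
  exact (div_log_le_one_add_inv_natLog_mul hf hmul hm hn).trans_lt hlt

end MultiplicativeFekete

section WindowSums

variable (A : Set ℕ)

noncomputable def reciprocalSum (a b : ℕ) : ℝ :=
  ∑ x ∈ Finset.Icc a b, A.indicator (fun x => 1 / (x : ℝ)) x

noncomputable def maxWindowSum (n : ℕ) : ℝ :=
  ⨆ k : {k : ℕ // 1 ≤ k}, reciprocalSum A k (n * k)

theorem indicator_one_div_nonneg (x : ℕ) : 0 ≤ A.indicator (fun x => 1 / (x : ℝ)) x :=
  Set.indicator_nonneg (fun x _ => by positivity) x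

theorem reciprocalSum_mono_right (a : ℕ) : Monotone (reciprocalSum A a) := fun _ _ hb =>
  Finset.sum_le_sum_of_subset_of_nonneg (Finset.Icc_subset_Icc_right hb)
    fun x _ _ => indicator_one_div_nonneg A x

theorem reciprocalSum_le_add (a b c : ℕ) :
    reciprocalSum A a c ≤ reciprocalSum A a b + reciprocalSum A b c := by
  have hcover : Finset.Icc a c ⊆ Finset.Icc a b ∪ Finset.Icc b c := by
    intro x
    simp only [Finset.mem_union, Finset.mem_Icc]
    omega
  have hunion := Finset.sum_le_sum_of_subset_of_nonneg hcover
    fun x _ _ => indicator_one_div_nonneg A x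
  have hinter := Finset.sum_union_inter (s₁ := Finset.Icc a b) (s₂ := Finset.Icc b c)
    (f := A.indicator fun x => 1 / (x : ℝ))
  have hinter_nonneg : 0 ≤ ∑ x ∈ Finset.Icc a b ∩ Finset.Icc b c,
      A.indicator (fun x => 1 / (x : ℝ)) x :=
    Finset.sum_nonneg fun x _ => indicator_one_div_nonneg A x
  unfold reciprocalSum
  linarith

theorem reciprocalSum_window_le {k : ℕ} (hk : 1 ≤ k) (n : ℕ) : reciprocalSum A k (n * k) ≤ n := by
  have hterm : ∀ x ∈ Finset.Icc k (n * k), A.indicator (fun x => 1 / (x : ℝ)) x ≤ 1 / k := by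
    intro x hx
    refine Set.indicator_apply_le' (fun _ => ?_) (fun _ => by positivity)
    gcongr
    exact (Finset.mem_Icc.1 hx).1
  have hcard : (Finset.Icc k (n * k)).card ≤ n * k := by
    rw [Nat.card_Icc]
    omega
  have hk' : (0 : ℝ) < k := by exact_mod_cast hk
  calc reciprocalSum A k (n * k) ≤ (Finset.Icc k (n * k)).card • (1 / k : ℝ) :=
        Finset.sum_le_card_nsmul _ _ _ hterm
    _ ≤ (n * k : ℕ) • (1 / k : ℝ) := by
        rw [nsmul_eq_mul, nsmul_eq_mul]
        gcongr
    _ = n := by rw [nsmul_eq_mul]; push_cast; field_simp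

theorem bddAbove_range_reciprocalSum_window (n : ℕ) :
    BddAbove (Set.range fun k : {k : ℕ // 1 ≤ k} => reciprocalSum A k (n * k)) := by
  refine ⟨n, ?_⟩
  rintro _ ⟨⟨k, hk⟩, rfl⟩
  exact reciprocalSum_window_le A hk n

theorem reciprocalSum_window_le_maxWindowSum {k : ℕ} (hk : 1 ≤ k) (n : ℕ) :
    reciprocalSum A k (n * k) ≤ maxWindowSum A n :=
  le_ciSup (bddAbove_range_reciprocalSum_window A n) (⟨k, hk⟩ : {k : ℕ // 1 ≤ k})

theorem maxWindowSum_mono : Monotone (maxWindowSum A) := fun _ _ hn =>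
  ciSup_mono (bddAbove_range_reciprocalSum_window A _) fun k =>
    reciprocalSum_mono_right A k (Nat.mul_le_mul_right k hn)

theorem maxWindowSum_mul_le {m : ℕ} (hm : 1 ≤ m) (n : ℕ) :
    maxWindowSum A (m * n) ≤ maxWindowSum A m + maxWindowSum A n := by
  refine ciSup_le fun ⟨k, hk⟩ => ?_
  calc reciprocalSum A k (m * n * k)
      ≤ reciprocalSum A k (m * k) + reciprocalSum A (m * k) (n * (m * k)) := by
        rw [show m * n * k = n * (m * k) by ring]
        exact reciprocalSum_le_add A _ _ _
    _ ≤ maxWindowSum A m + maxWindowSum A n :=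
        add_le_add (reciprocalSum_window_le_maxWindowSum A hk m)
          (reciprocalSum_window_le_maxWindowSum A (one_le_mul hm hk) n)

theorem lBDseq_eq_maxWindowSum_div_log (n : ℕ) :
    lBDseq A n = maxWindowSum A n / Real.log n := by
  rw [lBDseq, ← Real.mul_iSup_of_nonneg (one_div_nonneg.2 (Real.log_natCast_nonneg n)),
    one_div_mul_eq_div]
  rfl

end WindowSums

theorem lBDseq_tendsto_general (A : Set ℕ) :
    Filter.Tendsto (lBDseq A) Filter.atTop (nhds (⨅ n : {m : ℕ // 2 ≤ m}, lBDseq A n)) := by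
  rw [funext (lBDseq_eq_maxWindowSum_div_log A)]
  exact tendsto_div_log_iInf (maxWindowSum_mono A) fun m n hm => maxWindowSum_mul_le A hm n

theorem lBDseq_tendsto (A : Set ℕ) (hA : ∀ a ∈ A, 0 < a) :
    Filter.Tendsto (lBDseq A) Filter.atTop (nhds (⨅ n : {m : ℕ // 2 ≤ m}, lBDseq A n)) :=
  lBDseq_tendsto_general A
end

section
/- For any set A ⊆ ℕ of positive integers, the upper Banach logarithmic density of A is at most the upper Banach density of A: ℓBD(A) ≤ BD(A). -/
/-!
Fix a window length `L` and let `d = BDseq A L`, so every window `[m, m + L]` with `m ≥ 1` contains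
at most `d (L + 1)` elements of `A`. Cut `[k, nk]` into consecutive windows. The first contributes
at most `d (L + 1) / k ≤ d (L + 1)` to `∑_{x ∈ A ∩ [k, nk]} 1/x`; a later window starting at `m`
contributes at most `d (L + 1) / m ≤ d (log m - log (m - L - 1))`, the logarithmic increment over
the preceding window. Telescoping, the sum is at most `d (L + 1) + d log n`, so
`lBDseq A n ≤ d + d (L + 1) / log n`. Hence `lBD A ≤ BDseq A L` for every `L`, and so
`lBD A ≤ BD A`.
-/

open Filter

open scoped Classical in
/-- The quantity `sup_{k ≥ 1} |A ∩ [k, k+n]| / (n+1)`. -/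
noncomputable def BDseq (A : Set ℕ) (n : ℕ) : ℝ :=
  ⨆ k : {k : ℕ // 1 ≤ k},
    (((Finset.Icc (k : ℕ) (k + n)).filter (· ∈ A)).card : ℝ) / ((n : ℝ) + 1)

/-- The upper Banach density, `BD(A) = lim_{n→∞} BDseq A n`.
Since the limit always exists, it coincides with the `limsup`, which we use as definition. -/
noncomputable def BD (A : Set ℕ) : ℝ :=
  Filter.limsup (BDseq A) Filter.atTop

open Real Topology

open scoped Classical

lemma one_sub_div_le_log_sub_log {a b : ℝ} (ha : 0 < a) (hb : 0 < b) :
    1 - a / b ≤ log b - log a := by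
  simpa only [inv_div, log_div hb.ne' ha.ne'] using one_sub_inv_le_log_of_pos (div_pos hb ha)

noncomputable def recipSum (A : Set ℕ) (a b : ℕ) : ℝ :=
  ∑ x ∈ Finset.Icc a b, A.indicator (fun x => 1 / (x : ℝ)) x

section recipSum

variable (A : Set ℕ)

lemma recipSum_nonneg (a b : ℕ) : 0 ≤ recipSum A a b :=
  Finset.sum_nonneg fun x _ => Set.indicator_nonneg (fun y _ => by positivity) x

lemma recipSum_mono_right (a : ℕ) {b c : ℕ} (hbc : b ≤ c) : recipSum A a b ≤ recipSum A a c :=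
  Finset.sum_le_sum_of_subset_of_nonneg (Finset.Icc_subset_Icc_right hbc)
    fun x _ _ => Set.indicator_nonneg (fun y _ => by positivity) x

lemma recipSum_eq_add {a b c : ℕ} (hab : a ≤ b + 1) (hbc : b ≤ c) :
    recipSum A a c = recipSum A a b + recipSum A (b + 1) c := by
  have hsplit : Finset.Icc a c = Finset.Icc a b ∪ Finset.Icc (b + 1) c := by
    ext x
    simp only [Finset.mem_Icc, Finset.mem_union]
    omega
  have hdisj : Disjoint (Finset.Icc a b) (Finset.Icc (b + 1) c) :=
    Finset.disjoint_left.2 fun x hx hx' => by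
      simp only [Finset.mem_Icc] at hx hx'
      omega
  rw [recipSum, hsplit, Finset.sum_union hdisj, recipSum, recipSum]

lemma recipSum_le_card_div {a : ℕ} (ha : 0 < a) (b : ℕ) :
    recipSum A a b ≤ ((Finset.Icc a b).filter (· ∈ A)).card / a := by
  rw [recipSum, Finset.sum_indicator_eq_sum_filter, div_eq_mul_one_div, ← nsmul_eq_mul]
  refine Finset.sum_le_card_nsmul _ _ _ fun x hx => ?_
  have hax : a ≤ x := (Finset.mem_Icc.1 (Finset.mem_filter.1 hx).1).1
  gcongr

end recipSum

lemma card_filter_Icc_add_le (A : Set ℕ) (k L : ℕ) :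
    ((Finset.Icc k (k + L)).filter (· ∈ A)).card ≤ L + 1 :=
  (Finset.card_filter_le _ _).trans (by rw [Nat.card_Icc]; omega)

lemma BDseq_le_one (A : Set ℕ) (n : ℕ) : BDseq A n ≤ 1 :=
  Real.iSup_le (fun k => (div_le_one (by positivity)).2 (by
    exact_mod_cast card_filter_Icc_add_le A k n)) zero_le_one

lemma lBDseq_nonneg (A : Set ℕ) (n : ℕ) : 0 ≤ lBDseq A n :=
  Real.iSup_nonneg fun k =>
    mul_nonneg (one_div_nonneg.2 (log_natCast_nonneg n)) (recipSum_nonneg A k (n * k))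

def WindowDensityLE (A : Set ℕ) (L : ℕ) (d : ℝ) : Prop :=
  ∀ m, 1 ≤ m → (((Finset.Icc m (m + L)).filter (· ∈ A)).card : ℝ) ≤ d * (L + 1)

lemma windowDensityLE_BDseq (A : Set ℕ) (L : ℕ) : WindowDensityLE A L (BDseq A L) := by
  intro m hm
  have hbdd : BddAbove (Set.range fun k : {k : ℕ // 1 ≤ k} =>
      (((Finset.Icc (k : ℕ) (k + L)).filter (· ∈ A)).card : ℝ) / ((L : ℝ) + 1)) :=
    ⟨1, by
      rintro _ ⟨k, rfl⟩
      exact (div_le_one (by positivity)).2 (by exact_mod_cast card_filter_Icc_add_le A k L)⟩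
  exact (div_le_iff₀ (by positivity)).1 (le_ciSup hbdd ⟨m, hm⟩)

namespace WindowDensityLE

variable {A : Set ℕ} {L : ℕ} {d : ℝ}

lemma nonneg (h : WindowDensityLE A L d) : 0 ≤ d :=
  nonneg_of_mul_nonneg_left ((Nat.cast_nonneg _).trans (h 1 le_rfl)) (by positivity)

lemma recipSum_le_card_window (h : WindowDensityLE A L d) {k : ℕ} (hk : 1 ≤ k) :
    recipSum A k (k + L) ≤ d * (L + 1) / k :=
  (recipSum_le_card_div A hk _).trans (div_le_div_of_nonneg_right (h k hk) (Nat.cast_nonneg k))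

lemma recipSum_le (h : WindowDensityLE A L d) (t : ℕ) {k : ℕ} (hk : 1 ≤ k) :
    recipSum A k (k + t) ≤ d * (L + 1) / k + d * (log (k + t) - log k) := by
  induction t using Nat.strong_induction_on generalizing k with
  | _ t ih =>
    have hk0 : (0 : ℝ) < k := by exact_mod_cast hk
    by_cases ht : t ≤ L
    · have hlog : log k ≤ log ((k : ℝ) + t) := log_le_log hk0 (by linarith [t.cast_nonneg (α := ℝ)])
      calc recipSum A k (k + t) ≤ recipSum A k (k + L) := recipSum_mono_right A k (by omega)
        _ ≤ d * (L + 1) / k := h.recipSum_le_card_window hk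
        _ ≤ _ := le_add_of_nonneg_right (mul_nonneg h.nonneg (by linarith))
    · obtain ⟨s, rfl⟩ : ∃ s, t = L + 1 + s := ⟨t - (L + 1), by omega⟩
      set k' := k + L + 1
      have hk' : (k' : ℝ) = k + (L + 1) := by push_cast [k']; ring
      have hk'0 : (0 : ℝ) < k' := by positivity
      have hend : ((k' + s : ℕ) : ℝ) = k + (L + 1 + s : ℕ) := by push_cast [k']; ring
      have hstep : d * (L + 1) / k' ≤ d * (log k' - log k) := by
        have := one_sub_div_le_log_sub_log hk0 hk'0
        have hfrac : ((L : ℝ) + 1) / k' = 1 - k / k' := by field_simp; linarith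
        rw [mul_div_assoc, hfrac]
        exact mul_le_mul_of_nonneg_left this h.nonneg
      have hrest := ih s (by omega) (k := k') (by omega)
      rw [← Nat.cast_add, hend] at hrest
      rw [show k + (L + 1 + s) = k' + s by omega,
        recipSum_eq_add A (b := k + L) (by omega) (by omega)]
      calc recipSum A k (k + L) + recipSum A (k + L + 1) (k' + s)
          ≤ d * (L + 1) / k + (d * (L + 1) / k' + d * (log (k + (L + 1 + s : ℕ)) - log k')) :=
            add_le_add (h.recipSum_le_card_window hk) hrest
        _ ≤ _ := by linarith

lemma lBDseq_le (h : WindowDensityLE A L d) {n : ℕ} (hn : 2 ≤ n) :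
    lBDseq A n ≤ d + d * (L + 1) / log n := by
  have hlogn : 0 < log n := log_pos (by exact_mod_cast hn)
  refine ciSup_le fun ⟨k, hk⟩ => ?_
  have hk0 : (0 : ℝ) < k := by exact_mod_cast hk
  obtain ⟨t, ht⟩ : ∃ t, n * k = k + t :=
    ⟨n * k - k, (Nat.add_sub_cancel' (Nat.le_mul_of_pos_left k (by omega))).symm⟩
  have hlog : log ((k : ℝ) + t) = log n + log k := by
    rw [← log_mul (by positivity) hk0.ne']
    exact_mod_cast congrArg (fun m : ℕ => log m) ht.symm
  have hsum : recipSum A k (n * k) ≤ d * (L + 1) + d * log n := by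
    have hdiv : d * (L + 1) / k ≤ d * (L + 1) :=
      div_le_self (mul_nonneg h.nonneg (by positivity)) (by exact_mod_cast hk)
    have := h.recipSum_le t hk
    rw [hlog, ← ht] at this
    linarith
  calc 1 / log n * recipSum A k (n * k) ≤ 1 / log n * (d * (L + 1) + d * log n) := by gcongr
    _ = d + d * (L + 1) / log n := by field_simp; ring

lemma lBD_le (h : WindowDensityLE A L d) : lBD A ≤ d := by
  have hlim : Tendsto (fun n : ℕ => d + d * (L + 1) / log n) atTop (𝓝 d) := by
    simpa using tendsto_const_nhds.add
      (tendsto_const_nhds.div_atTop (tendsto_log_atTop.comp tendsto_natCast_atTop_atTop))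
  calc lBD A ≤ limsup (fun n : ℕ => d + d * (L + 1) / log n) atTop :=
        limsup_le_limsup (eventually_atTop.2 ⟨2, fun n hn => h.lBDseq_le hn⟩)
          (isCoboundedUnder_le_of_le atTop (lBDseq_nonneg A)) hlim.isBoundedUnder_le
    _ = d := hlim.limsup_eq

end WindowDensityLE

theorem lBD_le_BD_general (A : Set ℕ) : lBD A ≤ BD A :=
  le_limsup_of_frequently_le
    (Frequently.of_forall fun L => (windowDensityLE_BDseq A L).lBD_le)
    (isBoundedUnder_of ⟨1, BDseq_le_one A⟩)

theorem lBD_le_BD (A : Set ℕ) (hA : ∀ a ∈ A, 0 < a) : lBD A ≤ BD A :=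
  lBD_le_BD_general A
end

section
/- Let 0 < α < 1 and let j ∈ ℕ satisfy (j−1)/j > α. Let (u_i) be a sequence of positive integers with u_0 = 2 and u_{i+1} > (j·u_i)³ for all i ≥ 0, and set A = ⋃_{i=1}^∞ ([u_i, j·u_i] ∩ ℕ). Then for any n ∈ ℕ there exists m ∈ ℕ such that there is no 3-term geometric progression G = {a, a·r, a·r²} with a > m and r > m that is an n-approximate subset of A. -/
open Filter

/-- A set `X` is an `n`-approximate subset of `A` if every `x ∈ X` satisfies
`x/n < a < x*n` for some `a ∈ A`. -/
def ApproxSubset (n : ℕ) (X A : Set ℕ) : Prop :=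
  ∀ x ∈ X, ∃ a ∈ A, x < a * n ∧ a < x * n

/-!
Let `b₁, b₂, b₃ ∈ A` approximate `a, ar, ar²` within the factor `n`. Then `b₁ b₃ < b₂² n⁴`,
since `a · ar² = (ar)²`. As `r` is large compared to the width `j` of the bands `[uᵢ, j uᵢ]`,
`b₃` lies in a later band than `b₂`, so sparseness gives `b₂³ < b₃`. Hence `b₁ b₂ < n⁴`,
and `a < b₁ n < n⁵`, which fails once `a` is large.
-/

section Bands

variable {u : ℕ → ℕ} {j : ℕ}

theorem strictMono_of_cube_lt (hj : 1 ≤ j) (hu : ∀ i, (j * u i) ^ 3 < u (i + 1)) :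
    StrictMono u :=
  strictMono_nat_of_lt_succ fun i =>
    calc u i ≤ j * u i := Nat.le_mul_of_pos_left _ hj
      _ ≤ (j * u i) ^ 3 := Nat.le_self_pow (by norm_num) _
      _ < u (i + 1) := hu i

theorem band_index_lt_of_approx_mul (hmono : Monotone u) {x r n b b' i k : ℕ}
    (hb : b < x * n) (hb' : x * r < b' * n) (hbi : u i ≤ b) (hb'k : b' ≤ j * u k)
    (hr : j * n ^ 2 ≤ r) : i < k := by
  by_contra! hki
  have : x * r < x * (j * n ^ 2) :=
    calc x * r < b' * n := hb'
      _ ≤ j * u k * n := by gcongr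
      _ ≤ j * u i * n := by gcongr; exact hmono hki
      _ ≤ j * b * n := by gcongr
      _ ≤ j * (x * n) * n := by gcongr
      _ = x * (j * n ^ 2) := by ring
  exact (lt_of_mul_lt_mul_left this (Nat.zero_le x)).not_ge hr

theorem cube_lt_of_band_index_lt (hmono : Monotone u) (hu : ∀ i, (j * u i) ^ 3 < u (i + 1))
    {b b' i k : ℕ} (hb : b ≤ j * u i) (hb' : u k ≤ b') (hik : i < k) : b ^ 3 < b' :=
  calc b ^ 3 ≤ (j * u i) ^ 3 := by gcongr
    _ < u (i + 1) := hu i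
    _ ≤ u k := hmono hik
    _ ≤ b' := hb'

end Bands

theorem lt_pow_four_of_approx_geometric {a r n b₁ b₂ b₃ : ℕ} (h₁ : b₁ < a * n)
    (h₂ : a * r < b₂ * n) (h₃ : b₃ < a * r ^ 2 * n) (hcube : b₂ ^ 3 < b₃) : b₁ < n ^ 4 := by
  have hn : 0 < n := Nat.pos_of_ne_zero fun h => by simp [h] at h₁
  have hb₂ : 0 < b₂ := Nat.pos_of_ne_zero fun h => by simp [h] at h₂
  have : b₁ * b₂ * b₂ ^ 2 < n ^ 4 * b₂ ^ 2 :=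
    calc b₁ * b₂ * b₂ ^ 2 = b₁ * b₂ ^ 3 := by ring
      _ ≤ b₁ * b₃ := by gcongr
      _ < (a * n) * (a * r ^ 2 * n) := Nat.mul_lt_mul'' h₁ h₃
      _ = (a * r) ^ 2 * n ^ 2 := by ring
      _ < (b₂ * n) ^ 2 * n ^ 2 := by gcongr
      _ = n ^ 4 * b₂ ^ 2 := by ring
  calc b₁ ≤ b₁ * b₂ := Nat.le_mul_of_pos_right _ hb₂
    _ < n ^ 4 := lt_of_mul_lt_mul_right this (Nat.zero_le _)

theorem not_approxSubset_geometric_of_sparse_bands {u : ℕ → ℕ} {j n a r : ℕ} {A : Set ℕ}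
    (hj : 1 ≤ j) (hu : ∀ i, (j * u i) ^ 3 < u (i + 1))
    (hA : ∀ b ∈ A, ∃ i, u i ≤ b ∧ b ≤ j * u i) (ha : n ^ 5 ≤ a) (hr : j * n ^ 2 ≤ r) :
    ¬ ApproxSubset n {a, a * r, a * r ^ 2} A := by
  intro happrox
  have hmono := (strictMono_of_cube_lt hj hu).monotone
  obtain ⟨b₁, hb₁A, hab₁, hb₁a⟩ := happrox a (by simp)
  obtain ⟨b₂, hb₂A, hab₂, hb₂a⟩ := happrox (a * r) (by simp)
  obtain ⟨b₃, hb₃A, hab₃, hb₃a⟩ := happrox (a * r ^ 2) (by simp)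
  obtain ⟨i₂, hi₂b₂, hb₂i₂⟩ := hA b₂ hb₂A
  obtain ⟨i₃, hi₃b₃, hb₃i₃⟩ := hA b₃ hb₃A
  have hab₃' : a * r * r < b₃ * n := by rwa [mul_assoc, ← sq]
  have hi : i₂ < i₃ := band_index_lt_of_approx_mul hmono hb₂a hab₃' hi₂b₂ hb₃i₃ hr
  have hb₁n := lt_pow_four_of_approx_geometric hb₁a hab₂ hb₃a
    (cube_lt_of_band_index_lt hmono hu hb₂i₂ hi₃b₃ hi)
  have : a < n ^ 5 :=
    calc a < b₁ * n := hab₁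
      _ ≤ n ^ 4 * n := by gcongr
      _ = n ^ 5 := by ring
  omega

theorem no_approx_geometric_in_sparse_union_general (α : ℝ) (hα0 : 0 < α)
    (j : ℕ) (hj : α < ((j : ℝ) - 1) / j)
    (u : ℕ → ℕ) (hu : ∀ i : ℕ, (j * u i) ^ 3 < u (i + 1))
    (A : Set ℕ) (hA : A = ⋃ i ∈ {i : ℕ | 1 ≤ i}, Set.Icc (u i) (j * u i)) :
    ∀ n : ℕ, 0 < n → ∃ m : ℕ, ∀ a r : ℕ, m < a → m < r →
      ¬ ApproxSubset n ({a, a * r, a * r ^ 2} : Set ℕ) A := by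
  have hj₁ : 1 ≤ j := Nat.one_le_iff_ne_zero.mpr (by rintro rfl; norm_num at hj; linarith)
  have hA' : ∀ b ∈ A, ∃ i, u i ≤ b ∧ b ≤ j * u i := by
    subst hA
    simp only [Set.mem_iUnion, Set.mem_Icc]
    exact fun b ⟨i, _, hb⟩ => ⟨i, hb⟩
  intro n hn
  refine ⟨j * n ^ 5, fun a r ha hr => ?_⟩
  have hn₅ : n ^ 5 ≤ j * n ^ 5 := Nat.le_mul_of_pos_left _ hj₁
  have hn₂ : j * n ^ 2 ≤ j * n ^ 5 := by gcongr; omega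
  exact not_approxSubset_geometric_of_sparse_bands hj₁ hu hA' (by omega) (by omega)

theorem no_approx_geometric_in_sparse_union (α : ℝ) (hα0 : 0 < α) (hα1 : α < 1)
    (j : ℕ) (hj : α < ((j : ℝ) - 1) / j)
    (u : ℕ → ℕ) (hu0 : u 0 = 2) (hu : ∀ i : ℕ, (j * u i) ^ 3 < u (i + 1))
    (A : Set ℕ) (hA : A = ⋃ i ∈ {i : ℕ | 1 ≤ i}, Set.Icc (u i) (j * u i)) :
    ∀ n : ℕ, 0 < n → ∃ m : ℕ, ∀ a r : ℕ, m < a → m < r →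
      ¬ ApproxSubset n ({a, a * r, a * r ^ 2} : Set ℕ) A :=
  no_approx_geometric_in_sparse_union_general α hα0 j hj u hu A hA
end

section
/- Let 0 < α < 1 and let j ∈ ℕ satisfy (j−1)/j > α. Let (u_i) be a sequence of positive integers with u_0 = 2 and u_{i+1} > (j·u_i)³ for all i ≥ 0, and set A = ⋃_{i=1}^∞ ([u_i, j·u_i] ∩ ℕ). Then the upper density of A is greater than α, while the upper Banach logarithmic density of A equals 0. -/
open Filter

open scoped Classical in
/-- The number of elements of `A ∩ [1,n]`, as a real number. -/
noncomputable def cnt (A : Set ℕ) (n : ℕ) : ℝ :=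
  ((Finset.Icc 1 n).filter (· ∈ A)).card

/-- Upper (asymptotic) density. -/
noncomputable def ud (A : Set ℕ) : ℝ :=
  Filter.limsup (fun n : ℕ => cnt A n / n) Filter.atTop

/-!
Each block `[u i, j * u i]` lies in `A` and fills the fraction `(j - 1) / j` of `[1, j * u i]`,
which bounds the upper density from below. For the logarithmic density: a block carries
logarithmic mass `∑ 1 / x ≤ j`, and a window `[k, n k]` meets few blocks. Indeed, if it meets
blocks `i < i'`, then `(j u_i)^3 < u_{i'} ≤ n k ≤ n j u_i`, so `2 ^ 2 ^ (i + 1) ≤ (j u_i)^2 < n`,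
i.e. `i < log₂ log₂ n`. Hence every window carries mass at most `j (log₂ log₂ n + 1) = o(log n)`.
-/

open Topology Finset

theorem two_pow_two_pow_le_of_sq_le {u : ℕ → ℕ} (h0 : 2 ≤ u 0) (h : ∀ i, u i ^ 2 ≤ u (i + 1))
    (i : ℕ) : 2 ^ 2 ^ i ≤ u i := by
  induction i with
  | zero => simpa using h0
  | succ i ih =>
    calc 2 ^ 2 ^ (i + 1) = (2 ^ 2 ^ i) ^ 2 := by rw [pow_succ, pow_mul]
      _ ≤ u i ^ 2 := Nat.pow_le_pow_left ih 2
      _ ≤ u (i + 1) := h i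

theorem strictMono_of_sq_le {u : ℕ → ℕ} (h0 : 2 ≤ u 0) (h : ∀ i, u i ^ 2 ≤ u (i + 1)) :
    StrictMono u :=
  strictMono_nat_of_lt_succ fun i => by
    have : 2 ≤ u i :=
      (Nat.le_self_pow (by positivity) 2).trans (two_pow_two_pow_le_of_sq_le h0 h i)
    nlinarith [h i]

theorem sum_Icc_one_div_le (j : ℕ) {a : ℕ} (ha : 1 ≤ a) :
    ∑ x ∈ Icc a (j * a), (1 / (x : ℝ)) ≤ j := by
  have ha' : (0 : ℝ) < a := by exact_mod_cast ha
  calc ∑ x ∈ Icc a (j * a), (1 / (x : ℝ))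
      ≤ #(Icc a (j * a)) • (1 / (a : ℝ)) :=
        sum_le_card_nsmul _ _ _ fun x hx =>
          one_div_le_one_div_of_le ha' (by exact_mod_cast (mem_Icc.1 hx).1)
    _ ≤ (j * a : ℕ) • (1 / (a : ℝ)) := by
        gcongr
        rw [Nat.card_Icc]; omega
    _ = j := by rw [nsmul_eq_mul]; push_cast; field_simp

theorem Finset.sum_le_card_image_nsmul {α ι M : Type*} [DecidableEq ι] [AddCommMonoid M]
    [PartialOrder M] [IsOrderedAddMonoid M] {s : Finset α} {f : α → M} {g : α → ι}
    {t : ι → Finset α} {B : M} (hf : ∀ x, 0 ≤ f x) (hg : ∀ x ∈ s, x ∈ t (g x))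
    (ht : ∀ i, ∑ x ∈ t i, f x ≤ B) : ∑ x ∈ s, f x ≤ #(s.image g) • B := by
  rw [← sum_fiberwise_of_maps_to fun x hx => mem_image_of_mem g hx]
  refine (sum_le_sum fun i _ => ?_).trans_eq (sum_const B)
  refine (sum_le_sum_of_subset_of_nonneg (fun x hx => ?_) fun x _ _ => hf x).trans (ht i)
  obtain ⟨hxs, rfl⟩ := mem_filter.1 hx
  exact hg x hxs

theorem Finset.card_le_succ_of_lt_imp_lt {s : Finset ℕ} {M : ℕ}
    (h : ∀ i ∈ s, ∀ i' ∈ s, i < i' → i < M) : #s ≤ M + 1 := by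
  rcases s.eq_empty_or_nonempty with rfl | hs
  · simp
  have : s ⊆ insert (s.max' hs) (range M) := fun i hi => by
    rcases (s.le_max' i hi).lt_or_eq with hlt | heq
    · exact mem_insert_of_mem (mem_range.2 (h i hi _ (s.max'_mem hs) hlt))
    · exact heq ▸ mem_insert_self _ _
  simpa using (card_le_card this).trans (card_insert_le _ _)

section Blocks

variable {j : ℕ} {u : ℕ → ℕ}

theorem sq_le_succ_of_mul_pow_three_lt (hj : 0 < j) (hu : ∀ i, (j * u i) ^ 3 < u (i + 1))
    (i : ℕ) : u i ^ 2 ≤ u (i + 1) := by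
  have : u i ≤ j * u i := Nat.le_mul_of_pos_left _ hj
  nlinarith [hu i, Nat.pow_le_pow_left this 3, Nat.zero_le (u i)]

theorem lt_log_log_of_lt_of_le_mul (hj : 0 < j) (hu0 : 2 ≤ u 0)
    (hu : ∀ i, (j * u i) ^ 3 < u (i + 1)) {i i' k n : ℕ} (hii' : i < i') (hk : k ≤ j * u i)
    (hn : u i' ≤ n * k) :
    i < Nat.log 2 (Nat.log 2 n) := by
  have hsq := sq_le_succ_of_mul_pow_three_lt hj hu
  set w := j * u i
  have hw : w ^ 2 * w < n * w :=
    calc w ^ 2 * w = w ^ 3 := by ring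
      _ < u (i + 1) := hu i
      _ ≤ u i' := (strictMono_of_sq_le hu0 hsq).monotone hii'
      _ ≤ n * k := hn
      _ ≤ n * w := Nat.mul_le_mul_left n hk
  have hpow : 2 ^ 2 ^ (i + 1) ≤ n :=
    calc 2 ^ 2 ^ (i + 1) = (2 ^ 2 ^ i) ^ 2 := by rw [pow_succ, pow_mul]
      _ ≤ w ^ 2 := Nat.pow_le_pow_left
          ((two_pow_two_pow_le_of_sq_le hu0 hsq i).trans (Nat.le_mul_of_pos_left _ hj)) 2
      _ ≤ n := (Nat.lt_of_mul_lt_mul_right hw).le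
  exact Nat.le_log_of_pow_le one_lt_two (Nat.le_log_of_pow_le one_lt_two hpow)

theorem sum_indicator_one_div_Icc_le (hj : 0 < j) (hu0 : 2 ≤ u 0)
    (hu : ∀ i, (j * u i) ^ 3 < u (i + 1)) {A : Set ℕ} (hA : A ⊆ ⋃ i, Set.Icc (u i) (j * u i))
    (n k : ℕ) :
    ∑ x ∈ Icc k (n * k), A.indicator (fun x => 1 / (x : ℝ)) x
      ≤ j * (Nat.log 2 (Nat.log 2 n) + 1) := by
  classical
  have hu1 : ∀ i, 1 ≤ u i := fun i =>
    (one_le_two.trans hu0).trans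
      ((strictMono_of_sq_le hu0 (sq_le_succ_of_mul_pow_three_lt hj hu)).monotone i.zero_le)
  choose! g hg using fun x (hx : x ∈ A) => Set.mem_iUnion.1 (hA hx)
  set s := (Icc k (n * k)).filter (· ∈ A)
  have hcard : #(s.image g) ≤ Nat.log 2 (Nat.log 2 n) + 1 := by
    refine card_le_succ_of_lt_imp_lt fun i hi i' hi' hii' => ?_
    obtain ⟨x, hx, rfl⟩ := mem_image.1 hi
    obtain ⟨y, hy, rfl⟩ := mem_image.1 hi'
    obtain ⟨hxk, hxA⟩ := mem_filter.1 hx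
    obtain ⟨hyk, hyA⟩ := mem_filter.1 hy
    exact lt_log_log_of_lt_of_le_mul hj hu0 hu hii' ((mem_Icc.1 hxk).1.trans (hg x hxA).2)
      ((hg y hyA).1.trans (mem_Icc.1 hyk).2)
  calc ∑ x ∈ Icc k (n * k), A.indicator (fun x => 1 / (x : ℝ)) x
      = ∑ x ∈ s, 1 / (x : ℝ) := by rw [sum_filter]; simp only [Set.indicator_apply]
    _ ≤ #(s.image g) • (j : ℝ) :=
        sum_le_card_image_nsmul (t := fun i => Icc (u i) (j * u i)) (fun x => by positivity)
          (fun x hx => mem_Icc.2 (hg x (mem_filter.1 hx).2)) fun i => sum_Icc_one_div_le j (hu1 i)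
    _ ≤ j * (Nat.log 2 (Nat.log 2 n) + 1) := by
        rw [nsmul_eq_mul, mul_comm]
        gcongr
        exact_mod_cast hcard

end Blocks

theorem natLog_two_le_two_mul_log (m : ℕ) : (Nat.log 2 m : ℝ) ≤ 2 * Real.log m := by
  have h := Real.natLog_le_logb m 2
  rw [Real.logb, Nat.cast_ofNat, le_div_iff₀ (Real.log_pos one_lt_two)] at h
  nlinarith [Real.log_two_gt_d9, Real.log_natCast_nonneg m]

theorem tendsto_natLog_natLog_div_log :
    Tendsto (fun n : ℕ => ((Nat.log 2 (Nat.log 2 n) : ℝ) + 1) / Real.log n) atTop (𝓝 0) := by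
  have hlog : Tendsto (fun n : ℕ => Real.log n) atTop atTop :=
    Real.tendsto_log_atTop.comp tendsto_natCast_atTop_atTop
  have hg : Tendsto (fun t => (2 * Real.log t + 3) / t) atTop (𝓝 0) := by
    have := (Real.isLittleO_log_id_atTop.tendsto_div_nhds_zero.const_mul 2).add
      (tendsto_inv_atTop_zero.const_mul 3)
    rw [mul_zero, mul_zero, add_zero] at this
    refine this.congr' ?_
    filter_upwards [eventually_ne_atTop 0] with t ht
    simp only [id]
    field_simp
  refine tendsto_of_tendsto_of_tendsto_of_le_of_le' tendsto_const_nhds (hg.comp hlog) ?_ ?_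
  · exact Eventually.of_forall fun n => div_nonneg (by positivity) (Real.log_natCast_nonneg n)
  filter_upwards [eventually_ge_atTop 2] with n hn
  have hlogn : 0 < Real.log n := Real.log_pos (by exact_mod_cast hn)
  have hlog2n : (0 : ℝ) < Nat.log 2 n := by exact_mod_cast Nat.log_pos one_lt_two hn
  have hM : (Nat.log 2 (Nat.log 2 n) : ℝ) + 1 ≤ 2 * Real.log (Real.log n) + 3 :=
    calc (Nat.log 2 (Nat.log 2 n) : ℝ) + 1 ≤ 2 * Real.log (Nat.log 2 n) + 1 := by
          gcongr; exact natLog_two_le_two_mul_log _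
      _ ≤ 2 * Real.log (2 * Real.log n) + 1 := by
          gcongr; exact natLog_two_le_two_mul_log n
      _ = 2 * Real.log (Real.log n) + 2 * Real.log 2 + 1 := by
          rw [Real.log_mul two_ne_zero hlogn.ne']; ring
      _ ≤ 2 * Real.log (Real.log n) + 3 := by linarith [Real.log_two_lt_d9]
  exact div_le_div_of_nonneg_right hM hlogn.le

theorem lBD_eq_zero_of_sum_le {A : Set ℕ} {B : ℕ → ℝ}
    (hB : Tendsto (fun n => B n / Real.log n) atTop (𝓝 0))
    (h : ∀ n k, 1 ≤ k → ∑ x ∈ Icc k (n * k), A.indicator (fun x => 1 / (x : ℝ)) x ≤ B n) :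
    lBD A = 0 := by
  have : Nonempty {k : ℕ // 1 ≤ k} := ⟨⟨1, le_rfl⟩⟩
  refine (tendsto_of_tendsto_of_tendsto_of_le_of_le tendsto_const_nhds hB (fun n => ?_)
    fun n => ?_).limsup_eq
  · exact Real.iSup_nonneg fun k => mul_nonneg (one_div_nonneg.2 (Real.log_natCast_nonneg n))
      (sum_nonneg fun x _ => Set.indicator_nonneg (fun y _ => by positivity) x)
  · refine ciSup_le fun k => ?_
    rw [one_div_mul_eq_div]
    exact div_le_div_of_nonneg_right (h n k k.2) (Real.log_natCast_nonneg n)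

open scoped Classical in
theorem cnt_le_self (A : Set ℕ) (n : ℕ) : cnt A n ≤ n := by
  unfold cnt
  exact_mod_cast (card_filter_le _ _).trans (by simp)

theorem le_ud_of_frequently_le {A : Set ℕ} {c : ℝ} (h : ∃ᶠ n in atTop, c ≤ cnt A n / n) :
    c ≤ ud A :=
  le_limsup_of_frequently_le h
    (isBoundedUnder_of ⟨1, fun n => div_le_one_of_le₀ (cnt_le_self A n) n.cast_nonneg⟩)

open scoped Classical in
theorem sub_one_div_le_cnt_div {A : Set ℕ} {j a : ℕ} (hj : 0 < j) (ha : 1 ≤ a)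
    (h : Set.Icc a (j * a) ⊆ A) : ((j : ℝ) - 1) / j ≤ cnt A (j * a) / (j * a : ℕ) := by
  have hcnt : ((j : ℝ) - 1) * a ≤ cnt A (j * a) :=
    calc ((j : ℝ) - 1) * a ≤ ((j * a + 1 - a : ℕ) : ℝ) := by
          rw [Nat.cast_sub (by nlinarith)]; push_cast; linarith
      _ = #(Icc a (j * a)) := by rw [Nat.card_Icc]
      _ ≤ cnt A (j * a) := by
          unfold cnt
          exact_mod_cast card_le_card fun x hx =>
            mem_filter.2 ⟨Icc_subset_Icc_left ha hx, h (mem_Icc.1 hx)⟩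
  have ha' : (0 : ℝ) < a := by exact_mod_cast ha
  calc ((j : ℝ) - 1) / j = ((j : ℝ) - 1) * a / (j * a) := (mul_div_mul_right _ _ ha'.ne').symm
    _ ≤ cnt A (j * a) / (j * a : ℕ) := by push_cast; gcongr

theorem sparse_union_ud_pos_lBD_zero_general (α : ℝ) (hα0 : 0 < α)
    (j : ℕ) (hj : α < ((j : ℝ) - 1) / j)
    (u : ℕ → ℕ) (hu0 : u 0 = 2) (hu : ∀ i : ℕ, (j * u i) ^ 3 < u (i + 1))
    (A : Set ℕ) (hA : A = ⋃ i ∈ {i : ℕ | 1 ≤ i}, Set.Icc (u i) (j * u i)) :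
    α < ud A ∧ lBD A = 0 := by
  -- for `j = 0` the right-hand side of `hj` is `-1 / 0 = 0`
  have hj0 : 0 < j := Nat.pos_of_ne_zero fun h => by subst h; norm_num at hj; linarith
  have hmono := strictMono_of_sq_le hu0.ge (sq_le_succ_of_mul_pow_three_lt hj0 hu)
  subst hA
  refine ⟨hj.trans_le (le_ud_of_frequently_le (frequently_atTop.2 fun N => ?_)), ?_⟩
  · have hN : N + 1 ≤ u (N + 1) := hmono.id_le (N + 1)
    refine ⟨j * u (N + 1), ?_, sub_one_div_le_cnt_div hj0 (by omega) ?_⟩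
    · exact (N.le_succ.trans hN).trans (Nat.le_mul_of_pos_left _ hj0)
    · exact fun x hx => Set.mem_biUnion (x := N + 1) (by simp) hx
  · refine lBD_eq_zero_of_sum_le ?_ fun n k _ =>
      sum_indicator_one_div_Icc_le hj0 hu0.ge hu (Set.iUnion₂_subset_iUnion _ _) n k
    simpa [mul_div_assoc] using tendsto_natLog_natLog_div_log.const_mul (j : ℝ)

theorem sparse_union_ud_pos_lBD_zero (α : ℝ) (hα0 : 0 < α) (hα1 : α < 1)
    (j : ℕ) (hj : α < ((j : ℝ) - 1) / j)
    (u : ℕ → ℕ) (hu0 : u 0 = 2) (hu : ∀ i : ℕ, (j * u i) ^ 3 < u (i + 1))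
    (A : Set ℕ) (hA : A = ⋃ i ∈ {i : ℕ | 1 ≤ i}, Set.Icc (u i) (j * u i)) :
    α < ud A ∧ lBD A = 0 :=
  sparse_union_ud_pos_lBD_zero_general α hα0 j hj u hu0 hu A hA
end
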